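/- Let k be a field and s, t ∈ k. Define the maps A_s, B_t, C_u on Zorn vector matrices by A_s(a, (v₁,v₂,v₃), (w₁,w₂,w₃), d) = (a, (v₁, v₂ − s·v₃, v₃), (w₁, w₂, w₃ + s·w₂), d), B_t(a, (v₁,v₂,v₃), (w₁,w₂,w₃), d) = (a, (v₁, v₂, v₃ − t·v₁), (w₁ + t·w₃, w₂, w₃), d), and C_u(a, (v₁,v₂,v₃), (w₁,w₂,w₃), d) = (a, (v₁, v₂ − u·v₁, v₃), (w₁ + u·w₂, w₂, w₃), d). Then the Chevalley commutator relation [B_t, A_s] = C_{st} holds: B_{−t} ∘ A_{−s} ∘ B_t ∘ A_s = C_{st}. -/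

import Mathlib

open Matrix

/-- A Zorn vector matrix (split octonion) over `k`. -/
abbrev Zorn (k : Type*) := k × (Fin 3 → k) × (Fin 3 → k) × k

variable {k : Type*} [Field k]

/-- The Chevalley generator `γ_ι⁺(s)` acting on Zorn vector matrices. -/
def Agen (s : k) (x : Zorn k) : Zorn k :=
  (x.1, ![x.2.1 0, x.2.1 1 - s * x.2.1 2, x.2.1 2],
   ![x.2.2.1 0, x.2.2.1 1, x.2.2.1 2 + s * x.2.2.1 1], x.2.2.2)

/-- The Chevalley generator `γ_ȷ⁺(t)` acting on Zorn vector matrices. -/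
def Bgen (t : k) (x : Zorn k) : Zorn k :=
  (x.1, ![x.2.1 0, x.2.1 1, x.2.1 2 - t * x.2.1 0],
   ![x.2.2.1 0 + t * x.2.2.1 2, x.2.2.1 1, x.2.2.1 2], x.2.2.2)

/-- The Chevalley generator `γ_κ⁻(u)` acting on Zorn vector matrices. -/
def Cgen (u : k) (x : Zorn k) : Zorn k :=
  (x.1, ![x.2.1 0, x.2.1 1 - u * x.2.1 0, x.2.1 2],
   ![x.2.2.1 0 + u * x.2.2.1 1, x.2.2.1 1, x.2.2.1 2], x.2.2.2)

/-!
On each of the two vector slots of a Zorn matrix the generators act by elementary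
transvections `x_ij(c) = 1 + c • E_ij` (on `v` by the contragredient of the action on `w`),
while the scalar slots are fixed. The relation is therefore the Steinberg commutator relation
`[x_ij(a), x_jl(b)] = x_il(ab)` for distinct `i, j, l`, which holds because `E_ij E_jl = E_il`
and every other product of these matrix units vanishes.
-/

namespace Matrix

variable {n R : Type*} [Fintype n] [DecidableEq n] [CommRing R]

theorem transvection_commutator {i j l : n} (hij : i ≠ j) (hjl : j ≠ l) (hil : i ≠ l) (a b : R) :
    transvection i j (-a) * transvection j l (-b) * transvection i j a * transvection j l b =
      transvection i l (a * b) := by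
  simp only [transvection, ← single_neg, Matrix.mul_add, Matrix.add_mul, mul_one, one_mul, mul_neg,
    neg_mul, single_mul_single_same, single_mul_single_of_ne, ne_eq, hij.symm, hjl.symm, hil.symm,
    not_false_eq_true, neg_zero, add_zero]
  abel

theorem transvection_commutator_swap {i j l : n} (hij : i ≠ j) (hjl : j ≠ l) (hil : i ≠ l)
    (a b : R) :
    transvection j l (-b) * transvection i j (-a) * transvection j l b * transvection i j a =
      transvection i l (-(a * b)) := by
  simp only [transvection, ← single_neg, Matrix.mul_add, Matrix.add_mul, mul_one, one_mul, mul_neg,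
    neg_mul, single_mul_single_same, single_mul_single_of_ne, ne_eq, hij.symm, hjl.symm, hil.symm,
    not_false_eq_true, neg_zero, add_zero]
  abel

end Matrix

namespace Zorn

variable {R : Type*} [Semiring R]

def mapVectors (P Q : Matrix (Fin 3) (Fin 3) R) (x : Zorn R) : Zorn R :=
  (x.1, P *ᵥ x.2.1, Q *ᵥ x.2.2.1, x.2.2.2)

theorem mapVectors_comp (P Q P' Q' : Matrix (Fin 3) (Fin 3) R) :
    mapVectors P Q ∘ mapVectors P' Q' = mapVectors (P * P') (Q * Q') := by
  funext x
  simp [mapVectors, mulVec_mulVec]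

end Zorn

open Zorn

theorem Agen_eq_mapVectors (s : k) :
    Agen s = mapVectors (transvection 1 2 (-s)) (transvection 2 1 s) := by
  funext x
  refine Prod.ext rfl (Prod.ext ?_ (Prod.ext ?_ rfl)) <;> ext i <;> fin_cases i <;>
    simp [Agen, mapVectors, transvection, add_mulVec, single_mulVec, sub_eq_add_neg]

theorem Bgen_eq_mapVectors (t : k) :
    Bgen t = mapVectors (transvection 2 0 (-t)) (transvection 0 2 t) := by
  funext x
  refine Prod.ext rfl (Prod.ext ?_ (Prod.ext ?_ rfl)) <;> ext i <;> fin_cases i <;>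
    simp [Bgen, mapVectors, transvection, add_mulVec, single_mulVec, sub_eq_add_neg]

theorem Cgen_eq_mapVectors (u : k) :
    Cgen u = mapVectors (transvection 1 0 (-u)) (transvection 0 1 u) := by
  funext x
  refine Prod.ext rfl (Prod.ext ?_ (Prod.ext ?_ rfl)) <;> ext i <;> fin_cases i <;>
    simp [Cgen, mapVectors, transvection, add_mulVec, single_mulVec, sub_eq_add_neg]

/-- The Chevalley commutator relation `[B_t, A_s] = C_{st}`. -/
theorem chevalley_commutator (s t : k) :
    Bgen (-t) ∘ Agen (-s) ∘ Bgen t ∘ Agen s = Cgen (s * t) := by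
  simp only [Agen_eq_mapVectors, Bgen_eq_mapVectors, Cgen_eq_mapVectors, mapVectors_comp,
    ← Matrix.mul_assoc]
  rw [transvection_commutator_swap (by decide) (by decide) (by decide),
    transvection_commutator (by decide) (by decide) (by decide), neg_mul_neg, mul_comm t s]
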